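/- arXiv:1809.10215 — 3 statements merged into one kernel-verified Lean document; each statement's English description precedes it below -/
import Mathlib

section
/- Let f : ℝ → ℝ be convex with f ≥ 0. Then for all real numbers a, b, c, d with a ≥ c ≥ d ≥ b, one has (a - b)·(f(a) + f(b)) ≥ (c - d)·(f(c) + f(d)). -/
theorem stmt1 (f : ℝ → ℝ) (hf : ConvexOn ℝ Set.univ f) (hf0 : ∀ x, 0 ≤ f x)
    (a b c d : ℝ) (hac : c ≤ a) (hcd : d ≤ c) (hdb : b ≤ d) :
    (c - d) * (f c + f d) ≤ (a - b) * (f a + f b) := by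
  rcases eq_or_lt_of_le (le_trans hdb (le_trans hcd hac) : b ≤ a) with hab | hab
  · have hca : c = a := le_antisymm hac (by linarith [hab ▸ (le_trans hdb hcd)])
    have hda : d = a := by linarith
    rw [hca, hda]
    simp [← hab]
  · have hab' : (0:ℝ) < a - b := by linarith
    have key : ∀ x : ℝ, b ≤ x → x ≤ a →
        ∃ u : ℝ, 0 ≤ u ∧ u ≤ 1 ∧ x = u * a + (1 - u) * b ∧
          f x ≤ u * f a + (1 - u) * f b := by
      intro x hbx hxa
      refine ⟨(x - b) / (a - b), div_nonneg (by linarith) hab'.le,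
        (div_le_one hab').mpr (by linarith), by field_simp; ring, ?_⟩
      have h := hf.2 (Set.mem_univ a) (Set.mem_univ b)
        (div_nonneg (by linarith : (0:ℝ) ≤ x - b) hab'.le)
        (show (0:ℝ) ≤ 1 - (x - b) / (a - b) by
          have : (x - b) / (a - b) ≤ 1 := (div_le_one hab').mpr (by linarith)
          linarith)
        (show (x - b) / (a - b) + (1 - (x - b) / (a - b)) = 1 by ring)
      have hx : (x - b) / (a - b) * a + (1 - (x - b) / (a - b)) * b = x := by
        field_simp; ring
      simpa [smul_eq_mul, hx] using h
    obtain ⟨t, ht0, ht1, hc, hfc⟩ := key c (le_trans hdb hcd) hac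
    obtain ⟨s, hs0, hs1, hd, hfd⟩ := key d hdb (le_trans hcd hac)
    have hcd' : c - d = (t - s) * (a - b) := by rw [hc, hd]; ring
    have hst : s ≤ t := by nlinarith
    have h1 : (t - s) * (t + s) ≤ 1 := by nlinarith
    have h2 : (t - s) * (2 - t - s) ≤ 1 := by nlinarith
    have keyineq : (t - s) * ((t + s) * f a + (2 - t - s) * f b) ≤ f a + f b := by
      nlinarith [mul_le_mul_of_nonneg_right h1 (hf0 a),
        mul_le_mul_of_nonneg_right h2 (hf0 b)]
    calc (c - d) * (f c + f d)
        ≤ (c - d) * ((t * f a + (1 - t) * f b) + (s * f a + (1 - s) * f b)) := by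
          apply mul_le_mul_of_nonneg_left (by linarith) (by linarith)
      _ = (t - s) * ((t + s) * f a + (2 - t - s) * f b) * (a - b) := by
          rw [hcd']; ring
      _ ≤ (f a + f b) * (a - b) := mul_le_mul_of_nonneg_right keyineq hab'.le
      _ = (a - b) * (f a + f b) := by ring
end

section
/- Let μ : ℝ^N × ℝ^N → [0,∞) be measurable and symmetric, and let u : ℝ^N → ℝ and p ∈ (1,∞) be such that (x,y) ↦ [u(y)-u(x)]·|u(x)|^{p-2}u(x)·μ(x,y) is integrable on ℝ^N × ℝ^N. Then ∬ [u(y)-u(x)]·|u(x)|^{p-2}u(x)·μ(x,y) dy dx ≤ 0. -/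
open MeasureTheory

lemma phi_mono (p : ℝ) (hp : 1 < p) : Monotone (fun a : ℝ => |a| ^ (p - 2) * a) := by
  have key0 : ∀ c : ℝ, 0 ≤ c → c ^ (p - 2) * c = c ^ (p - 1) := by
    intro c hc
    have : p - 1 = (p - 2) + 1 := by ring
    rw [this, Real.rpow_add' hc (by linarith), Real.rpow_one]
  have key : ∀ c : ℝ, 0 ≤ c → |c| ^ (p - 2) * c = c ^ (p - 1) := by
    intro c hc
    rw [abs_of_nonneg hc, key0 c hc]
  have keyneg : ∀ c : ℝ, c < 0 → |c| ^ (p - 2) * c = -((-c) ^ (p - 1)) := by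
    intro c hc
    rw [abs_of_neg hc]
    have h1 : (-c) ^ (p - 2) * c = -((-c) ^ (p - 2) * (-c)) := by ring
    rw [h1, key0 (-c) (by linarith)]
  intro a b hab
  rcases le_or_gt 0 a with ha | ha
  · have hb : 0 ≤ b := le_trans ha hab
    simp only [key a ha, key b hb]
    exact Real.rpow_le_rpow ha hab (by linarith)
  · rcases le_or_gt 0 b with hb | hb
    · simp only [keyneg a ha, key b hb]
      have h1 : (0:ℝ) ≤ (-a) ^ (p - 1) := Real.rpow_nonneg (by linarith) _
      have h2 : (0:ℝ) ≤ b ^ (p - 1) := Real.rpow_nonneg hb _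
      linarith
    · simp only [keyneg a ha, keyneg b hb]
      have := Real.rpow_le_rpow (x := -b) (by linarith) (by linarith : -b ≤ -a)
        (by linarith : (0:ℝ) ≤ p - 1)
      linarith

theorem stmt9 {N : ℕ} (μ : (Fin N → ℝ) → (Fin N → ℝ) → ℝ)
    (hμmeas : Measurable (Function.uncurry μ))
    (hμ0 : ∀ x y, 0 ≤ μ x y) (hsym : ∀ x y, μ x y = μ y x)
    (u : (Fin N → ℝ) → ℝ) (hu : Measurable u) (p : ℝ) (hp : 1 < p)
    (hint : Integrable (fun q : (Fin N → ℝ) × (Fin N → ℝ) =>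
      (u q.2 - u q.1) * (|u q.1| ^ (p - 2) * u q.1) * μ q.1 q.2)) :
    ∫ x : Fin N → ℝ, ∫ y : Fin N → ℝ,
      (u y - u x) * (|u x| ^ (p - 2) * u x) * μ x y ≤ 0 := by
  set f : (Fin N → ℝ) × (Fin N → ℝ) → ℝ := fun q =>
    (u q.2 - u q.1) * (|u q.1| ^ (p - 2) * u q.1) * μ q.1 q.2 with hf
  have hintf : Integrable f (volume.prod volume) := by
    rw [← Measure.volume_eq_prod]; exact hint
  have heq : (∫ x : Fin N → ℝ, ∫ y : Fin N → ℝ,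
      (u y - u x) * (|u x| ^ (p - 2) * u x) * μ x y) = ∫ q, f q ∂(volume.prod volume) := by
    have := integral_integral (μ := (volume : Measure (Fin N → ℝ)))
      (ν := (volume : Measure (Fin N → ℝ)))
      (f := fun x y => (u y - u x) * (|u x| ^ (p - 2) * u x) * μ x y) hintf
    exact this
  rw [heq]
  have hswap : Integrable (fun q : (Fin N → ℝ) × (Fin N → ℝ) => f q.swap)
      (volume.prod volume) := hintf.swap
  have hswapeq : (∫ q, f q.swap ∂(volume.prod volume)) = ∫ q, f q ∂(volume.prod volume) :=
    integral_prod_swap f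
  have hsum : (∫ q, (f q + f q.swap) ∂(volume.prod volume)) ≤ 0 := by
    apply integral_nonpos
    intro q
    simp only [f, Prod.fst_swap, Prod.snd_swap, Pi.add_apply]
    have hmono := phi_mono p hp
    set a := u q.1
    set b := u q.2
    have key : (b - a) * (|a| ^ (p - 2) * a) + (a - b) * (|b| ^ (p - 2) * b) =
        -((b - a) * ((|b| ^ (p - 2) * b) - (|a| ^ (p - 2) * a))) := by ring
    have hmul : 0 ≤ (b - a) * ((|b| ^ (p - 2) * b) - (|a| ^ (p - 2) * a)) := by
      rcases le_total a b with h | h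
      · exact mul_nonneg (by linarith) (by have := hmono h; simpa using sub_nonneg.mpr this)
      · have := hmono h
        have h2 : (|b| ^ (p - 2) * b) - (|a| ^ (p - 2) * a) ≤ 0 := by
          simpa using sub_nonpos.mpr this
        nlinarith
    have hμ := hμ0 q.1 q.2
    calc (b - a) * (|a| ^ (p - 2) * a) * μ q.1 q.2 + (a - b) * (|b| ^ (p - 2) * b) * μ q.2 q.1
        = ((b - a) * (|a| ^ (p - 2) * a) + (a - b) * (|b| ^ (p - 2) * b)) * μ q.1 q.2 := by
          rw [hsym q.2 q.1]; ring
      _ = -((b - a) * ((|b| ^ (p - 2) * b) - (|a| ^ (p - 2) * a))) * μ q.1 q.2 := by rw [key]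
      _ ≤ 0 := mul_nonpos_of_nonpos_of_nonneg (by linarith) hμ
  rw [integral_add hintf hswap, hswapeq] at hsum
  linarith
end

section
/- Let f ∈ C¹(ℝ) be non-decreasing, let R > 0, ε > 0, and let M_f = max_{|ξ|≤R} |f(ξ)| and M_{f'} = max_{|ξ|≤R} |f'(ξ)|. Then for all a, b, c ∈ [-R, R] with |a-b| ≥ ε and |c-b| ≥ ε, | (f(a)-f(b))/(a-b) - (f(c)-f(b))/(c-b) | ≤ (2/ε²)·(M_f + R·M_{f'})·|a - c|. -/
/-! Both slopes share the base point `b`, so their difference splits as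
`(f a - f c) / (a - b) + (f c - f b) (c - a) / ((a - b) (c - b))`: the mean value theorem bounds
the first term by `M_{f'} |a - c| / ε ≤ 2 R M_{f'} |a - c| / ε²` (as `ε ≤ |a - b| ≤ 2 R`), and
`|f c - f b| ≤ 2 M_f` bounds the second by `2 M_f |a - c| / ε²`. -/

theorem slope_sub_slope_eq {𝕜 : Type*} [Field 𝕜] (f : 𝕜 → 𝕜) {a b c : 𝕜}
    (hab : a ≠ b) (hcb : c ≠ b) :
    slope f b a - slope f b c
      = (f a - f c) / (a - b) + (f c - f b) * (c - a) / ((a - b) * (c - b)) := by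
  rw [slope_def_field, slope_def_field]
  field_simp [sub_ne_zero.2 hab, sub_ne_zero.2 hcb]
  ring

theorem abs_slope_sub_slope_le (f : ℝ → ℝ) {a b c ε D L M : ℝ} (hε : 0 < ε)
    (hab : ε ≤ |a - b|) (hcb : ε ≤ |c - b|) (hD : |a - b| ≤ D)
    (hL : |f a - f c| ≤ L * |a - c|) (hM : |f c - f b| ≤ M) :
    |slope f b a - slope f b c| ≤ (D * L + M) / ε ^ 2 * |a - c| := by
  have hab₀ : 0 < |a - b| := hε.trans_le hab
  have hcb₀ : 0 < |c - b| := hε.trans_le hcb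
  have hε₂ : ε ^ 2 ≤ |a - b| * |c - b| := by
    rw [sq]; exact mul_le_mul hab hcb hε.le hab₀.le
  -- `1 / |a - b| = |a - b| / |a - b|²` trades the missing factor `1 / ε` for `D / ε²`.
  have hfirst : |(f a - f c) / (a - b)| ≤ D * L * |a - c| / ε ^ 2 := by
    have hL₀ : 0 ≤ L * |a - c| := (abs_nonneg _).trans hL
    rw [abs_div, div_le_div_iff₀ hab₀ (by positivity)]
    calc |f a - f c| * ε ^ 2 ≤ L * |a - c| * (|a - b| * |a - b|) := by
          gcongr
          exact (sq_le_sq₀ hε.le hab₀.le).2 hab |>.trans_eq (sq _)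
      _ = L * |a - c| * |a - b| * |a - b| := by ring
      _ ≤ L * |a - c| * D * |a - b| := by gcongr
      _ = D * L * |a - c| * |a - b| := by ring
  have hsecond : |(f c - f b) * (c - a) / ((a - b) * (c - b))| ≤ M * |a - c| / ε ^ 2 := by
    rw [abs_div, abs_mul, abs_mul, abs_sub_comm c a]
    exact div_le_div₀ (mul_nonneg ((abs_nonneg _).trans hM) (abs_nonneg _)) (by gcongr)
      (by positivity) hε₂
  rw [slope_sub_slope_eq f (sub_ne_zero.1 (abs_pos.1 hab₀)) (sub_ne_zero.1 (abs_pos.1 hcb₀))]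
  calc _ ≤ _ := abs_add_le _ _
    _ ≤ D * L * |a - c| / ε ^ 2 + M * |a - c| / ε ^ 2 := add_le_add hfirst hsecond
    _ = (D * L + M) / ε ^ 2 * |a - c| := by ring

theorem stmt13_general (f : ℝ → ℝ) (hf : ContDiff ℝ 1 f)
    (R ε Mf Mf' : ℝ) (hε : 0 < ε)
    (hMf : ∀ ξ : ℝ, |ξ| ≤ R → |f ξ| ≤ Mf)
    (hMf' : ∀ ξ : ℝ, |ξ| ≤ R → |deriv f ξ| ≤ Mf')
    (a b c : ℝ) (ha : a ∈ Set.Icc (-R) R) (hb : b ∈ Set.Icc (-R) R)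
    (hc : c ∈ Set.Icc (-R) R) (hab : ε ≤ |a - b|) (hcb : ε ≤ |c - b|) :
    |(f a - f b) / (a - b) - (f c - f b) / (c - b)| ≤
      2 / ε ^ 2 * (Mf + R * Mf') * |a - c| := by
  have hIcc : ∀ x ∈ Set.Icc (-R) R, |x| ≤ R := fun x hx => abs_le.2 hx
  have hD : |a - b| ≤ 2 * R := by
    have := Real.dist_le_of_mem_Icc ha hb
    rwa [Real.dist_eq, sub_neg_eq_add, ← two_mul] at this
  have hL : |f a - f c| ≤ Mf' * |a - c| := by
    simpa only [Real.norm_eq_abs] using Convex.norm_image_sub_le_of_norm_deriv_le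
      (fun x _ => (hf.differentiable one_ne_zero).differentiableAt)
      (fun x hx => hMf' x (hIcc x hx)) (convex_Icc (-R) R) hc ha
  have hM : |f c - f b| ≤ 2 * Mf := by
    linarith [abs_sub (f c) (f b), hMf c (hIcc c hc), hMf b (hIcc b hb)]
  have key := abs_slope_sub_slope_le f hε hab hcb hD hL hM
  rw [slope_def_field, slope_def_field] at key
  convert key using 2
  ring

theorem stmt13 (f : ℝ → ℝ) (hf : ContDiff ℝ 1 f) (hmono : Monotone f)
    (R ε Mf Mf' : ℝ) (hR : 0 < R) (hε : 0 < ε)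
    (hMf : ∀ ξ : ℝ, |ξ| ≤ R → |f ξ| ≤ Mf)
    (hMf' : ∀ ξ : ℝ, |ξ| ≤ R → |deriv f ξ| ≤ Mf')
    (a b c : ℝ) (ha : a ∈ Set.Icc (-R) R) (hb : b ∈ Set.Icc (-R) R)
    (hc : c ∈ Set.Icc (-R) R) (hab : ε ≤ |a - b|) (hcb : ε ≤ |c - b|) :
    |(f a - f b) / (a - b) - (f c - f b) / (c - b)| ≤
      2 / ε ^ 2 * (Mf + R * Mf') * |a - c| :=
  stmt13_general f hf R ε Mf Mf' hε hMf hMf' a b c ha hb hc hab hcb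
end
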